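/- arXiv:2204.09219 — 2 statements merged into one kernel-verified Lean document; each statement's English description precedes it below -/
import Mathlib

section
/- Let (K_1,…,K_n) be a Cantor-type graph-directed attractor in ℝ^d with level-k approximations Q_{i,k}, and let α ∈ {0,1}^d be a vertex of [0,1]^d. Then for each i ∈ {1,…,n}, α ∈ K_i if and only if α ∈ Q_{i,n}. -/
open Set

/-- The closed unit cube `[0,1]^d` in `ℝ^d`. -/
def unitCube (d : ℕ) : Set (Fin d → ℝ) := {x | ∀ m, x m ∈ Set.Icc (0 : ℝ) 1}

/-- The contracting similarity `x ↦ N⁻¹(x + t)` on `ℝ^d`. -/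
noncomputable def cmap {d : ℕ} (N : ℕ) (t : Fin d → ℕ) (x : Fin d → ℝ) : Fin d → ℝ :=
  fun m => (x m + t m) / N

/-- The face of `[0,1]^d` determined by an index set `s` and prescribed values `a`
(`a m ∈ {0,1}` for `m ∈ s`); its dimension is `d - s.card`. -/
def face {d : ℕ} (s : Finset (Fin d)) (a : Fin d → ℝ) : Set (Fin d → ℝ) :=
  {x | x ∈ unitCube d ∧ ∀ m ∈ s, x m = a m}

/-- A Cantor-type graph-directed system: a finite directed multigraph on `Fin n`
in which every vertex has an outgoing edge, together with translation vectors
`t e ∈ {0,…,N-1}^d`; distinct parallel edges carry distinct vectors. -/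
structure CantorGDS (d N n : ℕ) where
  E : Type
  fintypeE : Fintype E
  src : E → Fin n
  dst : E → Fin n
  t : E → Fin d → ℕ
  t_lt : ∀ e m, t e m < N
  exists_out : ∀ v : Fin n, ∃ e : E, src e = v
  distinct : ∀ e e' : E, src e = src e' → dst e = dst e' → t e = t e' → e = e'

namespace CantorGDS

/-- The map `φ_e(x) = N⁻¹(x + t_e)` associated with an edge. -/
noncomputable def phi {d N n : ℕ} (S : CantorGDS d N n) (e : S.E) : (Fin d → ℝ) → (Fin d → ℝ) :=
  cmap N (S.t e)

/-- `(K 1, …, K n)` is the Cantor-type graph-directed attractor of `S`: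
an `n`-tuple of nonempty compact sets with `K i = ⋃_{j} ⋃_{e ∈ E_{i,j}} φ_e(K j)`. -/
def IsAttractor {d N n : ℕ} (S : CantorGDS d N n) (K : Fin n → Set (Fin d → ℝ)) : Prop :=
  (∀ i, (K i).Nonempty) ∧ (∀ i, IsCompact (K i)) ∧
    (∀ i, K i = ⋃ e : S.E, ⋃ _ : S.src e = i, S.phi e '' K (S.dst e))

/-- The level-`k` approximations: `Q 0 i = [0,1]^d` and
`Q (k+1) i = ⋃_{j} ⋃_{e ∈ E_{i,j}} φ_e(Q k j)`. -/
def Q {d N n : ℕ} (S : CantorGDS d N n) : ℕ → Fin n → Set (Fin d → ℝ)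
  | 0, _ => unitCube d
  | (k+1), i => ⋃ e : S.E, ⋃ _ : S.src e = i, S.phi e '' CantorGDS.Q S k (S.dst e)

/-- A solid edge from `(i,j)` to `(i',j')` in the intersecting graph:
`i ≠ j` and there are `e ∈ E_{i,i'}`, `e' ∈ E_{j,j'}` with `φ_e = φ_{e'}`. -/
def SolidEdge {d N n : ℕ} (S : CantorGDS d N n) (i j i' j' : Fin n) : Prop :=
  i ≠ j ∧ ∃ e e' : S.E, S.src e = i ∧ S.dst e = i' ∧ S.src e' = j ∧ S.dst e' = j' ∧
    S.t e = S.t e'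

/-- `e, e'` witness a dashed edge: the cubes `φ_e([0,1]^d)` and `φ_{e'}([0,1]^d)` share a
nonempty common face of dimension at most `d-1`; equivalently `t_e ≠ t_{e'}` and every
coordinate of `t_e - t_{e'}` lies in `{-1,0,1}`. -/
def DashedWitness {d N n : ℕ} (S : CantorGDS d N n) (e e' : S.E) : Prop :=
  S.t e ≠ S.t e' ∧ ∀ m, ((S.t e m : ℤ) - (S.t e' m : ℤ)).natAbs ≤ 1

/-- A terminated edge from `(i,j)` to `(i',j')` in the intersecting graph: either a solid
edge with `i' = j'`, or a dashed edge witnessed by `e, e'` with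
`φ_e(K i') ∩ φ_{e'}(K j') ≠ ∅`. -/
def TerminatedEdge {d N n : ℕ} (S : CantorGDS d N n) (K : Fin n → Set (Fin d → ℝ))
    (i j i' j' : Fin n) : Prop :=
  i ≠ j ∧ ∃ e e' : S.E, S.src e = i ∧ S.dst e = i' ∧ S.src e' = j ∧ S.dst e' = j' ∧
    ((S.t e = S.t e' ∧ i' = j') ∨
      (DashedWitness S e e' ∧ (S.phi e '' K i' ∩ S.phi e' '' K j').Nonempty))

/-- A solid walk of length `m` in the intersecting graph starting from `(i,j)`. -/
def SolidWalkOfLength {d N n : ℕ} (S : CantorGDS d N n) (m : ℕ) (i j : Fin n) : Prop :=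
  ∃ p q : ℕ → Fin n, p 0 = i ∧ q 0 = j ∧
    ∀ k < m, SolidEdge S (p k) (q k) (p (k + 1)) (q (k + 1))

/-- An infinite solid walk in the intersecting graph starting from `(i,j)`. -/
def InfSolidWalk {d N n : ℕ} (S : CantorGDS d N n) (i j : Fin n) : Prop :=
  ∃ p q : ℕ → Fin n, p 0 = i ∧ q 0 = j ∧
    ∀ k, SolidEdge S (p k) (q k) (p (k + 1)) (q (k + 1))

/-- A terminated finite walk in the intersecting graph starting from `(i,j)`: a walk of
length `m + 1` whose first `m` edges are solid and whose last edge is terminated. -/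
def TerminatedWalk {d N n : ℕ} (S : CantorGDS d N n) (K : Fin n → Set (Fin d → ℝ))
    (i j : Fin n) : Prop :=
  ∃ m : ℕ, ∃ p q : ℕ → Fin n, p 0 = i ∧ q 0 = j ∧
    (∀ k < m, SolidEdge S (p k) (q k) (p (k + 1)) (q (k + 1))) ∧
    TerminatedEdge S K (p m) (q m) (p (m + 1)) (q (m + 1))

/-- The edge relation of the graph `G_P`: there is an edge from `i` to `j` whenever
`P ∩ ⋃_{e ∈ E_{i,j}} φ_e([0,1]^d) ≠ ∅`. -/
def GPEdge {d N n : ℕ} (S : CantorGDS d N n) (P : Set (Fin d → ℝ)) (i j : Fin n) : Prop :=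
  ∃ e : S.E, S.src e = i ∧ S.dst e = j ∧ (P ∩ S.phi e '' unitCube d).Nonempty

/-- There is a walk of length `k` in the graph `G_P` starting from `i`. -/
def GPWalk {d N n : ℕ} (S : CantorGDS d N n) (P : Set (Fin d → ℝ)) (i : Fin n) (k : ℕ) :
    Prop :=
  ∃ p : ℕ → Fin n, p 0 = i ∧ ∀ l < k, GPEdge S P (p l) (p (l + 1))

/-- `l` is a walk in the directed graph of `S` starting from vertex `i`. -/
def WalkFrom {d N n : ℕ} (S : CantorGDS d N n) (i : Fin n) (l : List S.E) : Prop :=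
  (∀ e ∈ l.head?, S.src e = i) ∧ List.Chain' (fun e e' => S.dst e = S.src e') l

/-- The terminal vertex of a walk `l` starting from `i` (equal to `i` if `l` is empty). -/
def ter {d N n : ℕ} (S : CantorGDS d N n) (i : Fin n) (l : List S.E) : Fin n :=
  l.getLast?.elim i S.dst

/-- For a walk `𝐞 = (e_1, …, e_k)`, the composition `φ_𝐞 = φ_{e_1} ∘ ⋯ ∘ φ_{e_k}`. -/
noncomputable def phiWalk {d N n : ℕ} (S : CantorGDS d N n) (l : List S.E) :
    (Fin d → ℝ) → (Fin d → ℝ) :=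
  l.foldr (fun e f => S.phi e ∘ f) id

/-- For an infinite walk `e`, the composition `φ_{e 0} ∘ ⋯ ∘ φ_{e (m-1)}` of its first
`m` maps. -/
noncomputable def compWalk {d N n : ℕ} (S : CantorGDS d N n) (e : ℕ → S.E) :
    ℕ → (Fin d → ℝ) → (Fin d → ℝ)
  | 0 => id
  | (m + 1) => CantorGDS.compWalk S e m ∘ S.phi (e m)

end CantorGDS

/-- The constant `c(n,d) = (d-1)n² + (n²+n)/2 + d - 1`. -/
def cConst (n d : ℕ) : ℕ := (d - 1) * n ^ 2 + (n ^ 2 + n) / 2 + d - 1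

/-! A point of `[0,1]^d` that some `φ_e` maps to a vertex `α` of the cube must be `α` itself,
so membership of `α` in `Q (k+1) i` or in `K i` only involves edges fixing `α`. Hence the
vertex sets `{j | α ∈ Q k j}` are the iterates on `univ` of the monotone operator
"has an `α`-fixing edge into", a decreasing chain in the `n`-element set `Fin n` that is
stationary from step `n` on. A set of vertices invariant under that operator lies in
`{j | α ∈ K j}`: the largest of the distances `infDist α (K j)` over the set is at most
`1/N` times itself. -/

open Metric

theorem isClosed_unitCube (d : ℕ) : IsClosed (unitCube d) := by
  have hpi : unitCube d = univ.pi fun _ => Icc (0 : ℝ) 1 := by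
    ext x; exact ⟨fun h m _ => h m, fun h m => h m trivial⟩
  rw [hpi]
  exact isClosed_set_pi fun _ _ => isClosed_Icc

section cmap

variable {d N : ℕ} {t : Fin d → ℕ}

theorem dist_cmap (x y : Fin d → ℝ) :
    dist (cmap N t x) (cmap N t y) = dist x y / N := by
  have hsmul : ∀ z : Fin d → ℝ, cmap N t z = (N : ℝ)⁻¹ • (z + fun m => (t m : ℝ)) := by
    intro z; funext m; simp [cmap, div_eq_inv_mul]
  rw [hsmul, hsmul, dist_smul₀, dist_add_right, norm_inv, Real.norm_natCast, inv_mul_eq_div]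

theorem infDist_cmap_image_le (hN : 0 < N) {A : Set (Fin d → ℝ)} (hA : A.Nonempty)
    (x : Fin d → ℝ) : infDist (cmap N t x) (cmap N t '' A) ≤ infDist x A / N := by
  have hN' : (0 : ℝ) < N := by exact_mod_cast hN
  rw [le_div_iff₀ hN', le_infDist hA]
  intro y hy
  rw [← le_div_iff₀ hN', ← dist_cmap]
  exact infDist_le_dist_of_mem (mem_image_of_mem _ hy)

theorem cmap_mem_unitCube (ht : ∀ m, t m < N) {x : Fin d → ℝ} (hx : x ∈ unitCube d) :
    cmap N t x ∈ unitCube d := by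
  intro m
  have hN : (t m : ℝ) + 1 ≤ N := by exact_mod_cast ht m
  have hpos : (0 : ℝ) < N := by linarith [(t m).cast_nonneg (α := ℝ)]
  obtain ⟨hx0, hx1⟩ := hx m
  refine ⟨div_nonneg (by positivity) hpos.le, (div_le_one hpos).2 ?_⟩
  linarith

theorem eq_of_cmap_eq_vertex (ht : ∀ m, t m < N) {α y : Fin d → ℝ}
    (hα : ∀ m, α m = 0 ∨ α m = 1) (hy : y ∈ unitCube d) (h : cmap N t y = α) : y = α := by
  funext m
  have hN : (t m : ℝ) + 1 ≤ N := by exact_mod_cast ht m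
  have ht0 : (0 : ℝ) ≤ t m := Nat.cast_nonneg _
  have hym : y m + t m = α m * N := by
    rw [← congrFun h m, cmap, div_mul_cancel₀]
    linarith
  obtain ⟨hy0, hy1⟩ := hy m
  rcases hα m with h0 | h1
  · rw [h0] at hym ⊢; linarith
  · rw [h1] at hym ⊢; linarith

theorem vertex_mem_cmap_image_iff (ht : ∀ m, t m < N) {α : Fin d → ℝ}
    (hα : ∀ m, α m = 0 ∨ α m = 1) {X : Set (Fin d → ℝ)} (hX : X ⊆ unitCube d) :
    α ∈ cmap N t '' X ↔ cmap N t α = α ∧ α ∈ X := by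
  constructor
  · rintro ⟨y, hy, hyα⟩
    obtain rfl := eq_of_cmap_eq_vertex ht hα (hX hy) hyα
    exact ⟨hyα, hy⟩
  · rintro ⟨hfix, hX⟩
    exact ⟨α, hX, hfix⟩

end cmap

theorem Monotone.iterate_card_succ_univ {ι : Type*} [Fintype ι] {F : Set ι → Set ι}
    (hF : Monotone F) : F^[Fintype.card ι + 1] univ = F^[Fintype.card ι] univ := by
  set c := Fintype.card ι
  set a : ℕ → Set ι := fun k => F^[k] univ with ha_def
  have ha : Antitone a := hF.antitone_iterate_of_map_le (subset_univ _)
  by_cases hstat : ∃ k ≤ c, a (k + 1) = a k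
  · obtain ⟨k, hk, hfix⟩ := hstat
    have hconst : ∀ m, a (m + k) = a k := fun m => by
      simp only [ha_def, Function.iterate_add_apply]
      exact Function.iterate_fixed (by rw [← Function.iterate_succ_apply' F k]; exact hfix) m
    change a (c + 1) = a c
    have hk' : k ≤ c + 1 := by omega
    rw [← Nat.sub_add_cancel hk', hconst, ← Nat.sub_add_cancel hk, hconst]
  · push Not at hstat
    have hcard : ∀ k ≤ c + 1, (a k).ncard + k ≤ c := by
      intro k hk
      induction k with
      | zero => simp [ha_def, c, Set.ncard_univ, Nat.card_eq_fintype_card]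
      | succ k ih =>
        have hlt : (a (k + 1)).ncard < (a k).ncard :=
          Set.ncard_lt_ncard ((ha k.le_succ).ssubset_of_ne (hstat k (by omega))) (toFinite _)
        have := ih (by omega)
        omega
    have := hcard (c + 1) le_rfl
    omega

namespace CantorGDS

variable {d N n : ℕ} (S : CantorGDS d N n)

def fixingPre (α : Fin d → ℝ) (X : Set (Fin n)) : Set (Fin n) :=
  {j | ∃ e, S.src e = j ∧ S.phi e α = α ∧ S.dst e ∈ X}

theorem fixingPre_mono (α : Fin d → ℝ) : Monotone (S.fixingPre α) :=
  fun _ _ hXY _ ⟨e, hsrc, hfix, hdst⟩ => ⟨e, hsrc, hfix, hXY hdst⟩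

theorem Q_subset_unitCube (k : ℕ) (i : Fin n) : S.Q k i ⊆ unitCube d := by
  induction k generalizing i with
  | zero => exact subset_rfl
  | succ k ih =>
    simp only [Q, iUnion_subset_iff, image_subset_iff]
    exact fun e _ x hx => cmap_mem_unitCube (S.t_lt e) (ih _ hx)

theorem mem_iUnion_phi_image_iff {α : Fin d → ℝ} (hα : ∀ m, α m = 0 ∨ α m = 1)
    {X : Fin n → Set (Fin d → ℝ)} (hX : ∀ j, X j ⊆ unitCube d) (i : Fin n) :
    α ∈ ⋃ e : S.E, ⋃ _ : S.src e = i, S.phi e '' X (S.dst e) ↔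
      i ∈ S.fixingPre α {j | α ∈ X j} := by
  simp only [mem_iUnion, exists_prop, phi, vertex_mem_cmap_image_iff (S.t_lt _) hα (hX _)]
  rfl

theorem setOf_vertex_mem_Q {α : Fin d → ℝ} (hα : ∀ m, α m = 0 ∨ α m = 1) (k : ℕ) :
    {j | α ∈ S.Q k j} = (S.fixingPre α)^[k] univ := by
  induction k with
  | zero => exact eq_univ_of_forall fun _ m => by rcases hα m with h | h <;> simp [h]
  | succ k ih =>
    ext i
    rw [Function.iterate_succ_apply', ← ih]
    exact S.mem_iUnion_phi_image_iff hα (S.Q_subset_unitCube k) i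

variable {S} {K : Fin n → Set (Fin d → ℝ)}

theorem IsAttractor.phi_image_subset (hK : S.IsAttractor K) (e : S.E) :
    S.phi e '' K (S.dst e) ⊆ K (S.src e) := by
  rw [hK.2.2 (S.src e)]
  exact subset_iUnion₂_of_subset e rfl subset_rfl

/-- The point of `⋃ j, K j` farthest from `[0,1]^d` is the image of a point at most `N` times
closer to it. -/
theorem IsAttractor.subset_unitCube (hN : 1 < N) (hK : S.IsAttractor K) (i : Fin n) :
    K i ⊆ unitCube d := by
  have hN' : (1 : ℝ) < N := by exact_mod_cast hN
  have hcube : (unitCube d).Nonempty := ⟨0, fun m => by simp⟩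
  intro x hx
  obtain ⟨z, hz, hmax⟩ := (isCompact_iUnion hK.2.1).exists_isMaxOn
    ⟨x, mem_iUnion.2 ⟨i, hx⟩⟩ (continuous_infDist_pt (unitCube d)).continuousOn
  obtain ⟨j, hzj⟩ := mem_iUnion.1 hz
  rw [hK.2.2 j] at hzj
  simp only [mem_iUnion] at hzj
  obtain ⟨e, -, y, hy, rfl⟩ := hzj
  have hcontract : infDist (S.phi e y) (unitCube d) ≤ infDist (S.phi e y) (unitCube d) / N :=
    calc infDist (S.phi e y) (unitCube d)
        ≤ infDist (S.phi e y) (S.phi e '' unitCube d) :=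
          infDist_le_infDist_of_subset (image_subset_iff.2 fun _ => cmap_mem_unitCube (S.t_lt e))
            (hcube.image _)
      _ ≤ infDist y (unitCube d) / N := infDist_cmap_image_le (by omega) hcube y
      _ ≤ infDist (S.phi e y) (unitCube d) / N := by
          gcongr; exact hmax (mem_iUnion.2 ⟨_, hy⟩)
  have hzero : infDist x (unitCube d) = 0 := by
    have hle : infDist x (unitCube d) ≤ infDist (S.phi e y) (unitCube d) :=
      hmax (mem_iUnion.2 ⟨i, hx⟩)
    rw [le_div_iff₀ (by linarith)] at hcontract
    nlinarith [infDist_nonneg (x := x) (s := unitCube d),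
      infDist_nonneg (x := S.phi e y) (s := unitCube d)]
  rwa [← mem_closure_iff_infDist_zero hcube, (isClosed_unitCube d).closure_eq] at hzero

theorem IsAttractor.subset_Q (hN : 1 < N) (hK : S.IsAttractor K) (k : ℕ) (i : Fin n) :
    K i ⊆ S.Q k i := by
  induction k generalizing i with
  | zero => exact hK.subset_unitCube hN i
  | succ k ih =>
    rw [hK.2.2 i, Q]
    exact iUnion₂_mono fun e _ => image_mono (ih _)

theorem IsAttractor.mem_of_subset_fixingPre (hN : 1 < N) (hK : S.IsAttractor K)
    {α : Fin d → ℝ} {X : Set (Fin n)} (hX : X ⊆ S.fixingPre α X) {i : Fin n} (hi : i ∈ X) :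
    α ∈ K i := by
  have hN' : (1 : ℝ) < N := by exact_mod_cast hN
  obtain ⟨j, hj, hmax⟩ := exists_max_image X (fun j => infDist α (K j)) (toFinite X) ⟨i, hi⟩
  obtain ⟨e, rfl, hfix, hdst⟩ := hX hj
  have hcontract : infDist α (K (S.src e)) ≤ infDist α (K (S.src e)) / N :=
    calc infDist α (K (S.src e))
        ≤ infDist (S.phi e α) (S.phi e '' K (S.dst e)) := by
          rw [hfix]
          exact infDist_le_infDist_of_subset (hK.phi_image_subset e) ((hK.1 _).image _)
      _ ≤ infDist α (K (S.dst e)) / N := infDist_cmap_image_le (by omega) (hK.1 _) α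
      _ ≤ infDist α (K (S.src e)) / N := by gcongr; exact hmax _ hdst
  have hzero : infDist α (K i) = 0 := by
    have hle := hmax i hi
    rw [le_div_iff₀ (by linarith)] at hcontract
    nlinarith [infDist_nonneg (x := α) (s := K i), infDist_nonneg (x := α) (s := K (S.src e))]
  rwa [← mem_closure_iff_infDist_zero (hK.1 i), (hK.2.1 i).isClosed.closure_eq] at hzero

end CantorGDS

theorem vertex_mem_attractor_iff_mem_approx_general
    {d N n : ℕ} (hN : 2 ≤ N)
    (S : CantorGDS d N n) (K : Fin n → Set (Fin d → ℝ)) (hK : S.IsAttractor K)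
    (α : Fin d → ℝ) (hα : ∀ m, α m = 0 ∨ α m = 1) (i : Fin n) :
    α ∈ K i ↔ α ∈ CantorGDS.Q S n i := by
  refine ⟨fun h => hK.subset_Q hN n i h,
    fun h => hK.mem_of_subset_fixingPre hN (X := {j | α ∈ S.Q n j}) ?_ h⟩
  have hstable := (S.fixingPre_mono α).iterate_card_succ_univ
  rw [Fintype.card_fin, Function.iterate_succ_apply'] at hstable
  rw [S.setOf_vertex_mem_Q hα]
  exact hstable.ge

/-- **Corollary.** For a vertex `α ∈ {0,1}^d` of the unit cube and each `i`,
`α ∈ K i` iff `α ∈ Q_{i,n}`. -/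
theorem vertex_mem_attractor_iff_mem_approx
    {d N n : ℕ} (hd : 1 ≤ d) (hN : 2 ≤ N) (hn : 1 ≤ n)
    (S : CantorGDS d N n) (K : Fin n → Set (Fin d → ℝ)) (hK : S.IsAttractor K)
    (α : Fin d → ℝ) (hα : ∀ m, α m = 0 ∨ α m = 1) (i : Fin n) :
    α ∈ K i ↔ α ∈ CantorGDS.Q S n i :=
  vertex_mem_attractor_iff_mem_approx_general hN S K hK α hα i
end

section
/- Let N ≥ 2 and a, b be positive integers, and let φ(x) = N^{−a}(x + t), φ_*(x) = N^{−a}(x + t_*), f(x) = N^{−b}(x + w), f_*(x) = N^{−b}(x + w_*) be contracting maps on ℝ^d (with t, t_*, w, w_* ∈ ℝ^d) such that each of the four maps sends [0,1]^d into itself. Suppose P and Q are faces of [0,1]^d with dim P = dim Q, φ(P) = φ_*(Q), and φ ∘ f(P) = φ_* ∘ f_*(Q). Then φ ∘ f^m(P) = φ_* ∘ f_*^m(Q) for every m ≥ 1. -/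
open Set

/-- The map `x ↦ N^{-a}(x + t)` on `ℝ^d`. -/
noncomputable def scaleMap {d : ℕ} (N a : ℕ) (t : Fin d → ℝ) (x : Fin d → ℝ) :
    Fin d → ℝ :=
  fun m => (x m + t m) / (N : ℝ) ^ a

/-!
By injectivity of `φ_*`, the hypothesis `φ(P) = φ_*(Q)` says that `Q` is the translate
`P + (t - t_*)`. Since `φ ∘ f` and `φ_* ∘ f_*` are again maps of the same shape, the second
hypothesis says that `Q` is also a translate `P + c'`. A nonempty bounded set determines the
vector by which it is translated, so `c' = t - t_*`, and this identity says exactly that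
translation by `t - t_*` conjugates `f` to `f_*`. Hence `f_*^m(Q) = f^m(P) + (t - t_*)`, which
`φ_*` maps onto `φ(f^m(P))`.
-/

open Function Bornology

section Translation

variable {E : Type*} [NormedAddCommGroup E] [NormedSpace ℝ E] {S : Set E}

theorem eq_zero_of_mapsTo_add {v : E} (hS : IsBounded S) (hne : S.Nonempty)
    (hv : MapsTo (· + v) S S) : v = 0 := by
  obtain ⟨x, hx⟩ := hne
  obtain ⟨C, hC⟩ := Metric.isBounded_iff.mp hS
  have hmem : ∀ n : ℕ, x + n • v ∈ S := by
    intro n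
    induction n with
    | zero => simpa using hx
    | succ n ih => simpa [succ_nsmul, add_assoc] using hv ih
  have hbound : ∀ n : ℕ, n * ‖v‖ ≤ C := fun n => by
    simpa [dist_eq_norm, RCLike.norm_nsmul ℝ] using hC (hmem n) hx
  by_contra hv0
  obtain ⟨n, hn⟩ := exists_nat_gt (C / ‖v‖)
  rw [div_lt_iff₀ (norm_pos_iff.mpr hv0)] at hn
  linarith [hbound n]

theorem eq_of_image_add_eq_image_add {u v : E} (hS : IsBounded S) (hne : S.Nonempty)
    (h : (· + u) '' S = (· + v) '' S) : u = v := by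
  refine sub_eq_zero.mp (eq_zero_of_mapsTo_add hS hne fun x hx => ?_)
  obtain ⟨y, hy, hyx⟩ : x + u ∈ (· + v) '' S := h ▸ mem_image_of_mem _ hx
  show x + (u - v) ∈ S
  rwa [← add_sub_assoc, ← hyx, add_sub_cancel_right]

end Translation

theorem isBounded_face {d : ℕ} (s : Finset (Fin d)) (a : Fin d → ℝ) : IsBounded (face s a) :=
  (Metric.isBounded_Icc (0 : Fin d → ℝ) 1).subset fun _ hx =>
    ⟨fun m => (hx.1 m).1, fun m => (hx.1 m).2⟩

section scaleMap

variable {d N : ℕ}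

theorem scaleMap_injective (hN : N ≠ 0) (a : ℕ) (t : Fin d → ℝ) :
    Injective (scaleMap N a t) := fun _ _ hxy => funext fun m =>
  add_right_cancel ((div_left_inj' (by positivity)).mp (congrFun hxy m))

theorem scaleMap_add_sub (a : ℕ) (t t₀ x : Fin d → ℝ) :
    scaleMap N a t₀ (x + (t - t₀)) = scaleMap N a t x := by
  funext m
  simp only [scaleMap, Pi.add_apply, Pi.sub_apply]
  ring_nf

theorem scaleMap_comp (hN : N ≠ 0) (a b : ℕ) (t w : Fin d → ℝ) :
    scaleMap N a t ∘ scaleMap N b w = scaleMap N (a + b) (w + (N : ℝ) ^ b • t) := by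
  funext x m
  simp only [comp_apply, scaleMap, Pi.add_apply, Pi.smul_apply, smul_eq_mul, pow_add]
  field_simp
  ring

theorem image_add_eq_of_scaleMap_image_eq (hN : N ≠ 0) {a : ℕ} {t t₀ : Fin d → ℝ}
    {S T : Set (Fin d → ℝ)} (h : scaleMap N a t '' S = scaleMap N a t₀ '' T) :
    (· + (t - t₀)) '' S = T := by
  apply (scaleMap_injective hN a t₀).image_injective
  rw [← h, image_image]
  exact image_congr' fun x => scaleMap_add_sub a t t₀ x

theorem scaleMap_semiconj_add (hN : N ≠ 0) {b : ℕ} {w w₀ c : Fin d → ℝ}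
    (hc : c + w₀ = w + (N : ℝ) ^ b • c) :
    Semiconj (· + c) (scaleMap N b w) (scaleMap N b w₀) := by
  intro x
  funext m
  have hm := congrFun hc m
  simp only [Pi.add_apply, Pi.smul_apply, smul_eq_mul] at hm
  simp only [scaleMap, Pi.add_apply]
  field_simp
  linarith

end scaleMap

theorem comp_iterate_face_eq_general
    {d N : ℕ} (hN : 2 ≤ N) (a b : ℕ)
    (t t₀ w w₀ : Fin d → ℝ)
    (sP sQ : Finset (Fin d)) (aP aQ : Fin d → ℝ)
    (h1 : scaleMap N a t '' face sP aP = scaleMap N a t₀ '' face sQ aQ)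
    (h2 : (scaleMap N a t ∘ scaleMap N b w) '' face sP aP =
          (scaleMap N a t₀ ∘ scaleMap N b w₀) '' face sQ aQ) :
    ∀ m : ℕ, 1 ≤ m →
      (scaleMap N a t ∘ (scaleMap N b w)^[m]) '' face sP aP =
      (scaleMap N a t₀ ∘ (scaleMap N b w₀)^[m]) '' face sQ aQ := by
  intro m _
  have hN0 : N ≠ 0 := by omega
  have hQ := image_add_eq_of_scaleMap_image_eq hN0 h1
  rcases (face sP aP).eq_empty_or_nonempty with hP | hP
  · simp [← hQ, hP]
  rw [scaleMap_comp hN0, scaleMap_comp hN0] at h2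
  have hc := eq_of_image_add_eq_image_add (isBounded_face sP aP) hP
    (hQ.trans (image_add_eq_of_scaleMap_image_eq hN0 h2).symm)
  have hconj : Semiconj (· + (t - t₀)) (scaleMap N b w) (scaleMap N b w₀) :=
    scaleMap_semiconj_add hN0 (by linear_combination (norm := module) hc)
  rw [← hQ, image_image]
  exact image_congr' fun x => by
    simp only [comp_apply, ← (hconj.iterate_right m) x, scaleMap_add_sub]

/-- **Lemma.** Let `φ(x) = N^{-a}(x+t)`, `φ_*(x) = N^{-a}(x+t_*)`, `f(x) = N^{-b}(x+w)`,
`f_*(x) = N^{-b}(x+w_*)` be contracting maps sending `[0,1]^d` into itself. If `P, Q` are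
faces of `[0,1]^d` with `dim P = dim Q`, `φ(P) = φ_*(Q)` and `φ∘f(P) = φ_*∘f_*(Q)`, then
`φ∘f^m(P) = φ_*∘f_*^m(Q)` for every `m ≥ 1`. -/
theorem comp_iterate_face_eq
    {d N : ℕ} (hN : 2 ≤ N) (a b : ℕ) (ha : 1 ≤ a) (hb : 1 ≤ b)
    (t t₀ w w₀ : Fin d → ℝ)
    (hφ : Set.MapsTo (scaleMap N a t) (unitCube d) (unitCube d))
    (hφ₀ : Set.MapsTo (scaleMap N a t₀) (unitCube d) (unitCube d))
    (hf : Set.MapsTo (scaleMap N b w) (unitCube d) (unitCube d))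
    (hf₀ : Set.MapsTo (scaleMap N b w₀) (unitCube d) (unitCube d))
    (sP sQ : Finset (Fin d)) (aP aQ : Fin d → ℝ)
    (haP : ∀ m ∈ sP, aP m = 0 ∨ aP m = 1) (haQ : ∀ m ∈ sQ, aQ m = 0 ∨ aQ m = 1)
    (hdim : sP.card = sQ.card)
    (h1 : scaleMap N a t '' face sP aP = scaleMap N a t₀ '' face sQ aQ)
    (h2 : (scaleMap N a t ∘ scaleMap N b w) '' face sP aP =
          (scaleMap N a t₀ ∘ scaleMap N b w₀) '' face sQ aQ) :
    ∀ m : ℕ, 1 ≤ m →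
      (scaleMap N a t ∘ (scaleMap N b w)^[m]) '' face sP aP =
      (scaleMap N a t₀ ∘ (scaleMap N b w₀)^[m]) '' face sQ aQ :=
  comp_iterate_face_eq_general hN a b t t₀ w w₀ sP sQ aP aQ h1 h2
end
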